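/- Let ℓ be even, let M be a perfect matching of a set of ℓ elements chosen uniformly at random, let S be a fixed subset of size s, and let E denote the number of matched pairs of M having exactly one element in S. If K is a natural number such that s − K and ℓ − s − K are both nonnegative and even, then P(E = K) = binom(s,K)·K!·(s−K−1)!!·binom(ℓ−s,K)·(ℓ−s−K−1)!! / (ℓ−1)!!. -/

import Mathlib

/-!
The `S`-endpoints of the pairs of `M` that leave `S` form a `K`-subset `A` of `S`. Given `A`, the
set `S \ A` is `M`-invariant, so `M` splits into a perfect matching of `S \ A`, counted by
`(s - K - 1)!!`, and a perfect matching of the complement of `S \ A` that pairs no two points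
of `A`. Matching the points of `A` one at a time, each to a partner outside `S`, counts the latter
as `(ℓ - s)(ℓ - s - 1)⋯(ℓ - s - K + 1) · (ℓ - s - K - 1)!!`, and summing over the `binom(s, K)`
choices of `A` gives the numerator. The recursion behind this count and behind the total count
`(ℓ - 1)!!` is the same: the matchings with `M a = b` are the matchings of the complement of
`{a, b}`.
-/

open Finset

/-- A perfect matching of `Fin ℓ`, encoded as a fixed-point-free involutive permutation. -/
abbrev PerfMatching (ℓ : ℕ) : Type := {f : Equiv.Perm (Fin ℓ) // ∀ x, f x ≠ x ∧ f (f x) = x}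

/-- `oddDoubleFact k = (2k-1)!! = (2k-1)(2k-3)⋯3⋅1`, with `oddDoubleFact 0 = (-1)!! = 1`. -/
def oddDoubleFact : ℕ → ℕ
  | 0 => 1
  | (k + 1) => (2 * k + 1) * oddDoubleFact k

theorem Nat.card_eq_card_mul_of_fibers {β γ : Type*} [Finite β] [Finite γ] (f : β → γ)
    (r : γ → Prop) (c : ℕ) (h_empty : ∀ y, ¬r y → IsEmpty {x // f x = y})
    (h_card : ∀ y, r y → Nat.card {x // f x = y} = c) :
    Nat.card β = Nat.card {y // r y} * c := by
  classical
  have := Fintype.ofFinite γ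
  rw [← Nat.card_congr (Equiv.sigmaFiberEquiv f), Nat.card_sigma,
    Nat.card_eq_fintype_card (α := Subtype r), Fintype.card_subtype, Finset.card_eq_sum_ones,
    Finset.sum_mul, Finset.sum_filter]
  refine Finset.sum_congr rfl fun y _ => ?_
  by_cases hy : r y
  · simp [hy, h_card y hy]
  · simp [hy, h_empty y hy]

theorem Nat.card_compl_pair {α : Type*} [Finite α] {a b : α} (hab : a ≠ b) :
    Nat.card ↥({a, b} : Set α)ᶜ = Nat.card α - 2 := by
  rw [Nat.card_coe_set_eq, Set.ncard_compl, Set.ncard_pair hab]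

theorem Nat.card_subtype_compl_pair {α : Type*} [Finite α] {q : α → Prop} {a b : α} (ha : q a)
    (hb : ¬q b) : Nat.card {x : ↥({a, b} : Set α)ᶜ // q x} = Nat.card {x // q x} - 1 := by
  have h_set : {x | x ∈ ({a, b} : Set α)ᶜ ∧ q x} = {x | q x} \ {a} := by
    ext x
    simp only [Set.mem_ofPred_eq, Set.mem_compl_iff, Set.mem_insert_iff, Set.mem_singleton_iff,
      Set.mem_sdiff]
    exact ⟨fun ⟨hx, hqx⟩ => ⟨hqx, fun h => hx (.inl h)⟩,
      fun ⟨hqx, hx⟩ => ⟨fun h => h.elim hx fun h => hb (h ▸ hqx), hqx⟩⟩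
  rw [Nat.card_congr (Equiv.subtypeSubtypeEquivSubtypeInter _ q)]
  change Nat.card ↥{x | x ∈ ({a, b} : Set α)ᶜ ∧ q x} = Nat.card ↥{x | q x} - 1
  rw [h_set, Nat.card_coe_set_eq, Nat.card_coe_set_eq,
    Set.ncard_sdiff_singleton_of_mem (s := {x | q x}) ha]

abbrev PerfMatchingOn (α : Type*) : Type _ := {f : Equiv.Perm α // ∀ x, f x ≠ x ∧ f (f x) = x}

namespace PerfMatchingOn

variable {α : Type*}

theorem apply_ne (M : PerfMatchingOn α) (x : α) : M.1 x ≠ x := (M.2 x).1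

theorem apply_apply (M : PerfMatchingOn α) (x : α) : M.1 (M.1 x) = x := (M.2 x).2

theorem apply_eq_iff (M : PerfMatchingOn α) {x y : α} : M.1 x = y ↔ M.1 y = x :=
  ⟨fun h => h ▸ M.apply_apply x, fun h => h ▸ M.apply_apply y⟩

def restrict (M : PerfMatchingOn α) (p : α → Prop) (h : ∀ x, p (M.1 x) ↔ p x) :
    PerfMatchingOn {x // p x} :=
  ⟨M.1.subtypePerm h, fun x =>
    ⟨fun hx => M.apply_ne x (congrArg Subtype.val hx), Subtype.ext (M.apply_apply x)⟩⟩

section Split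

variable (p : α → Prop) [DecidablePred p]

def glue (M : PerfMatchingOn {x // p x}) (N : PerfMatchingOn {x // ¬p x}) :
    PerfMatchingOn α :=
  ⟨M.1.subtypeCongr N.1, fun x => by
    by_cases hx : p x
    · simp only [Equiv.Perm.subtypeCongr.left_apply _ _ hx,
        Equiv.Perm.subtypeCongr.left_apply_subtype]
      exact ⟨fun h => M.apply_ne _ (Subtype.ext h), congrArg Subtype.val (M.apply_apply _)⟩
    · simp only [Equiv.Perm.subtypeCongr.right_apply _ _ hx,
        Equiv.Perm.subtypeCongr.right_apply_subtype]
      exact ⟨fun h => N.apply_ne _ (Subtype.ext h), congrArg Subtype.val (N.apply_apply _)⟩⟩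

def splitEquiv :
    {M : PerfMatchingOn α // ∀ x, p (M.1 x) ↔ p x} ≃
      PerfMatchingOn {x // p x} × PerfMatchingOn {x // ¬p x} where
  toFun M := (M.1.restrict p M.2, M.1.restrict (¬p ·) fun x => (M.2 x).not)
  invFun N := ⟨glue p N.1 N.2, fun x => by
    by_cases hx : p x
    · simpa [glue, Equiv.Perm.subtypeCongr.left_apply _ _ hx, hx] using (N.1.1 ⟨x, hx⟩).2
    · simpa [glue, Equiv.Perm.subtypeCongr.right_apply _ _ hx, hx] using (N.2.1 ⟨x, hx⟩).2⟩
  left_inv M := by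
    ext x
    by_cases hx : p x
    · simp [glue, restrict, Equiv.Perm.subtypeCongr.left_apply _ _ hx]
    · simp [glue, restrict, Equiv.Perm.subtypeCongr.right_apply _ _ hx]
  right_inv N := by
    ext x <;> simp [glue, restrict]

end Split

theorem card_exists_preserves (p : α → Prop) (P : PerfMatchingOn {x // ¬p x} → Prop) :
    Nat.card {M : PerfMatchingOn α //
        ∃ h : ∀ x, p (M.1 x) ↔ p x, P (M.restrict (¬p ·) fun x => (h x).not)} =
      Nat.card (PerfMatchingOn {x // p x}) * Nat.card {N // P N} := by
  classical
  rw [← Nat.card_prod]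
  exact Nat.card_congr <| (Equiv.subtypeSubtypeEquivSubtypeExists _ _).symm.trans <|
    ((splitEquiv p).subtypeEquiv (q := fun y => P y.2) fun _ => Iff.rfl).trans
      { toFun y := (y.1.1, ⟨y.1.2, y.2⟩), invFun z := ⟨(z.1, z.2.1), z.2.2⟩ }

theorem card_eq_one_of_card_eq_two (h : Nat.card α = 2) : Nat.card (PerfMatchingOn α) = 1 := by
  classical
  obtain ⟨x, y, hxy, hxy_univ⟩ := Nat.card_eq_two_iff.mp h
  have mem_pair (z : α) : z = x ∨ z = y := by
    simpa [← hxy_univ] using Set.mem_univ z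
  have swap_mem (z : α) : Equiv.swap x y z ≠ z ∧ Equiv.swap x y (Equiv.swap x y z) = z := by
    rcases mem_pair z with rfl | rfl <;> simp [hxy, hxy.symm]
  refine Nat.card_eq_one_iff_unique.mpr ⟨⟨fun M N => Subtype.ext <| Equiv.ext fun z => ?_⟩,
    ⟨⟨Equiv.swap x y, swap_mem⟩⟩⟩
  rcases mem_pair z with rfl | rfl <;>
    rcases mem_pair (M.1 z) with hM | hM <;> rcases mem_pair (N.1 z) with hN | hN <;>
    simp_all [M.apply_ne, N.apply_ne]

theorem apply_eq_iff_preserves_pair (M : PerfMatchingOn α) {a b : α} :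
    M.1 a = b ↔ ∀ x, M.1 x ∈ ({a, b} : Set α) ↔ x ∈ ({a, b} : Set α) := by
  constructor
  · intro h x
    have hb : M.1 b = a := M.apply_eq_iff.mp h
    simp only [Set.mem_insert_iff, Set.mem_singleton_iff]
    rw [M.apply_eq_iff, h, M.apply_eq_iff (y := b), hb]
    tauto
  · intro h
    simpa [M.apply_ne] using (h a).mpr (by simp)

theorem card_and_apply_eq {a b : α} (hab : a ≠ b) (Q : PerfMatchingOn α → Prop)
    (P : PerfMatchingOn ↥({a, b} : Set α)ᶜ → Prop)
    (hQP : ∀ M (h : ∀ x, M.1 x ∈ ({a, b} : Set α) ↔ x ∈ ({a, b} : Set α)),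
      Q M ↔ P (M.restrict (· ∉ ({a, b} : Set α)) fun x => (h x).not)) :
    Nat.card {M // Q M ∧ M.1 a = b} = Nat.card {N // P N} := by
  have h_pair : Nat.card (PerfMatchingOn ↥({a, b} : Set α)) = 1 :=
    card_eq_one_of_card_eq_two (Set.ncard_pair hab)
  calc Nat.card {M // Q M ∧ M.1 a = b}
      = Nat.card {M : PerfMatchingOn α //
          ∃ h : ∀ x, M.1 x ∈ ({a, b} : Set α) ↔ x ∈ ({a, b} : Set α),
            P (M.restrict (· ∉ ({a, b} : Set α)) fun x => (h x).not)} := by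
        refine Nat.card_congr (Equiv.subtypeEquivRight fun M => ?_)
        rw [M.apply_eq_iff_preserves_pair]
        exact ⟨fun ⟨hQ, h⟩ => ⟨h, (hQP M h).mp hQ⟩, fun ⟨h, hP⟩ => ⟨(hQP M h).mpr hP, h⟩⟩
    _ = Nat.card {N // P N} := by
        rw [card_exists_preserves (· ∈ ({a, b} : Set α)) P]
        exact (congrArg (· * _) h_pair).trans (one_mul _)

theorem card_eq_oddDoubleFact [Finite α] {n : ℕ} (h : Nat.card α = 2 * n) :
    Nat.card (PerfMatchingOn α) = oddDoubleFact n := by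
  induction n generalizing α with
  | zero =>
    have : IsEmpty α := Finite.card_eq_zero_iff.mp h
    exact Nat.card_eq_one_iff_unique.mpr ⟨inferInstance, ⟨⟨1, isEmptyElim⟩⟩⟩
  | succ n ih =>
    obtain ⟨a⟩ : Nonempty α := Nat.card_pos_iff.mp (by omega) |>.1
    have h_fiber (b : α) (hb : b ≠ a) :
        Nat.card {M : PerfMatchingOn α // M.1 a = b} = oddDoubleFact n := by
      have := card_and_apply_eq hb.symm (fun _ => True) (fun _ => True) fun _ _ => Iff.rfl
      simp only [true_and, Nat.card_subtype_true] at this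
      exact this.trans (ih (by rw [Nat.card_compl_pair hb.symm]; omega))
    have h_partners : Nat.card {b // b ≠ a} = 2 * n + 1 := by
      change Nat.card ↥({a} : Set α)ᶜ = _
      rw [Nat.card_coe_set_eq, Set.ncard_compl, Set.ncard_singleton, h]
      omega
    rw [Nat.card_eq_card_mul_of_fibers (fun M : PerfMatchingOn α => M.1 a) (· ≠ a) _
      (fun b hb => ⟨fun M => M.1.apply_ne a (not_not.mp hb ▸ M.2)⟩) h_fiber,
      h_partners, oddDoubleFact]

theorem card_avoids [Finite α] (q : α → Prop) {K t : ℕ} (hq : Nat.card {x // q x} = K)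
    (hα : Nat.card α = K + t) (ht : Even (t - K)) :
    Nat.card {M : PerfMatchingOn α // ∀ x, q x → ¬q (M.1 x)} =
      t.descFactorial K * oddDoubleFact ((t - K) / 2) := by
  induction K generalizing α t with
  | zero =>
    have : IsEmpty {x // q x} := Finite.card_eq_zero_iff.mp hq
    rw [Nat.card_congr (Equiv.subtypeUnivEquiv fun M x hx => isEmptyElim (⟨x, hx⟩ : {x // q x})),
      card_eq_oddDoubleFact (n := t / 2) (by obtain ⟨m, hm⟩ := ht; omega)]
    simp
  | succ K ih =>
    obtain ⟨⟨a, ha⟩⟩ : Nonempty {x // q x} := Nat.card_pos_iff.mp (by omega) |>.1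
    have h_empty (b : α) (hb : ¬¬q b) :
        IsEmpty {M : {M : PerfMatchingOn α // ∀ x, q x → ¬q (M.1 x)} // M.1.1 a = b} :=
      ⟨fun M => M.1.2 a ha (by rw [M.2]; exact not_not.mp hb)⟩
    have h_partners : Nat.card {b // ¬q b} = t := by
      change Nat.card ↥{x | q x}ᶜ = t
      rw [Nat.card_coe_set_eq, Set.ncard_compl, ← Nat.card_coe_set_eq,
        show Nat.card ↥{x | q x} = K + 1 from hq]
      omega
    have h_fiber (b : α) (hb : ¬q b) :
        Nat.card {M : {M : PerfMatchingOn α // ∀ x, q x → ¬q (M.1 x)} // M.1.1 a = b} =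
          (t - 1).descFactorial K * oddDoubleFact ((t - 1 - K) / 2) := by
      have hab : a ≠ b := fun h => hb (h ▸ ha)
      have ht1 : 1 ≤ t := by
        have : Nonempty {b // ¬q b} := ⟨⟨b, hb⟩⟩
        exact h_partners ▸ Nat.card_pos
      rw [Nat.card_congr (Equiv.subtypeSubtypeEquivSubtypeInter
          (fun M : PerfMatchingOn α => ∀ x, q x → ¬q (M.1 x)) (fun M => M.1 a = b)),
        card_and_apply_eq hab _
          (fun N : PerfMatchingOn ↥({a, b} : Set α)ᶜ => ∀ x : ↥({a, b} : Set α)ᶜ, q x → ¬q (N.1 x))]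
      · refine ih (fun x : ↥({a, b} : Set α)ᶜ => q x) ?_ ?_ ?_
        · rw [Nat.card_subtype_compl_pair ha hb, hq]; rfl
        · rw [Nat.card_compl_pair hab, hα]
          omega
        · rwa [Nat.sub_sub, Nat.add_comm 1]
      · intro M h
        have hMa : M.1 a = b := M.apply_eq_iff_preserves_pair.mpr h
        refine ⟨fun hM x hx => hM x hx, fun hM x hx => ?_⟩
        by_cases hx_pair : x ∈ ({a, b} : Set α)
        · rcases hx_pair with rfl | rfl
          · rwa [hMa]
          · exact absurd hx hb
        · exact hM ⟨x, hx_pair⟩ hx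
    rw [Nat.card_eq_card_mul_of_fibers
      (fun M : {M : PerfMatchingOn α // ∀ x, q x → ¬q (M.1 x)} => M.1.1 a)
      (fun b => ¬q b) _ h_empty h_fiber, h_partners]
    cases t with
    | zero => simp
    | succ t =>
      rw [Nat.succ_descFactorial_succ, Nat.add_sub_cancel, Nat.add_sub_add_right, mul_assoc]

section Crossing

variable [DecidableEq α]

def crossing (M : PerfMatchingOn α) (S : Finset α) : Finset α := S.filter fun a => M.1 a ∉ S

theorem crossing_eq_iff (M : PerfMatchingOn α) {S A : Finset α} (hA : A ⊆ S) :
    M.crossing S = A ↔ (∀ x, M.1 x ∈ S \ A ↔ x ∈ S \ A) ∧ ∀ x ∈ A, M.1 x ∉ A := by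
  simp only [Finset.ext_iff, crossing, mem_filter, mem_sdiff]
  constructor
  · intro h
    have maps_to (x : α) (hx : x ∈ S ∧ x ∉ A) : M.1 x ∈ S ∧ M.1 x ∉ A :=
      ⟨by_contra fun hMx => hx.2 ((h x).mp ⟨hx.1, hMx⟩),
        fun hMx => ((h _).mpr hMx).2 (by rw [M.apply_apply]; exact hx.1)⟩
    refine ⟨fun x => ⟨fun hx => ?_, maps_to x⟩, fun x hx => fun hMx => ((h x).mpr hx).2 (hA hMx)⟩
    simpa [M.apply_apply] using maps_to _ hx
  · rintro ⟨h_pres, h_avoid⟩ x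
    refine ⟨fun ⟨hxS, hMx⟩ => by_contra fun hxA => hMx ((h_pres x).mpr ⟨hxS, hxA⟩).1,
      fun hxA => ⟨hA hxA, fun hMx => ?_⟩⟩
    exact ((h_pres x).mp ⟨hMx, h_avoid x hxA⟩).2 hxA

variable [Fintype α]

theorem card_crossing_eq {S A : Finset α} {K : ℕ} (hA : A ⊆ S) (hAK : A.card = K)
    (hs : Even (S.card - K)) (ht : Even (Fintype.card α - S.card - K)) :
    Nat.card {M : PerfMatchingOn α // M.crossing S = A} =
      oddDoubleFact ((S.card - K) / 2) *
        ((Fintype.card α - S.card).descFactorial K *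
          oddDoubleFact ((Fintype.card α - S.card - K) / 2)) := by
  have hSα : S.card ≤ Fintype.card α := S.card_le_univ
  have hKS : K ≤ S.card := hAK ▸ card_le_card hA
  have h_inner : Nat.card ↥(S \ A) = 2 * ((S.card - K) / 2) := by
    rw [Nat.card_eq_fintype_card, Fintype.card_coe, card_sdiff_of_subset hA, hAK]
    exact (Nat.two_mul_div_two_of_even hs).symm
  have h_outer_A : Nat.card {x : {x // x ∉ S \ A} // x.1 ∈ A} = K := by
    rw [Nat.card_congr (Equiv.subtypeSubtypeEquivSubtype fun hx => by simp [hx]),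
      Nat.card_eq_fintype_card, Fintype.card_coe, hAK]
  have h_outer : Nat.card {x // x ∉ S \ A} = K + (Fintype.card α - S.card) := by
    rw [Nat.card_eq_fintype_card, Fintype.card_subtype_compl, Fintype.card_coe,
      card_sdiff_of_subset hA, hAK]
    omega
  have h_split (M : PerfMatchingOn α) : M.crossing S = A ↔
      ∃ h : ∀ x, M.1 x ∈ S \ A ↔ x ∈ S \ A, ∀ x : {x // x ∉ S \ A}, x.1 ∈ A → M.1 x ∉ A := by
    rw [M.crossing_eq_iff hA]
    exact ⟨fun ⟨h_pres, h_avoid⟩ => ⟨h_pres, fun x => h_avoid x⟩,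
      fun ⟨h_pres, h_avoid⟩ => ⟨h_pres, fun x hx => h_avoid ⟨x, fun h => (mem_sdiff.mp h).2 hx⟩ hx⟩⟩
  rw [Nat.card_congr (Equiv.subtypeEquivRight h_split)]
  refine (card_exists_preserves (· ∈ S \ A) fun N => ∀ x, x.1 ∈ A → (N.1 x).1 ∉ A).trans ?_
  rw [card_eq_oddDoubleFact h_inner, card_avoids _ h_outer_A h_outer ht]

theorem card_crossing_card_eq (S : Finset α) (K : ℕ) (hs : Even (S.card - K))
    (ht : Even (Fintype.card α - S.card - K)) :
    Nat.card {M : PerfMatchingOn α // (M.crossing S).card = K} =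
      S.card.choose K * (oddDoubleFact ((S.card - K) / 2) *
        ((Fintype.card α - S.card).descFactorial K *
          oddDoubleFact ((Fintype.card α - S.card - K) / 2))) := by
  have h_empty (A : Finset α) (hA : A ∉ S.powersetCard K) :
      IsEmpty {M : {M : PerfMatchingOn α // (M.crossing S).card = K} // M.1.crossing S = A} :=
    ⟨fun M => hA (mem_powersetCard.mpr ⟨M.2 ▸ filter_subset _ _, M.2 ▸ M.1.2⟩)⟩
  have h_fiber (A : Finset α) (hA : A ∈ S.powersetCard K) :
      Nat.card {M : {M : PerfMatchingOn α // (M.crossing S).card = K} // M.1.crossing S = A} =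
        oddDoubleFact ((S.card - K) / 2) * ((Fintype.card α - S.card).descFactorial K *
          oddDoubleFact ((Fintype.card α - S.card - K) / 2)) := by
    obtain ⟨hAS, hAK⟩ := mem_powersetCard.mp hA
    rw [Nat.card_congr (Equiv.subtypeSubtypeEquivSubtype
      (p := fun M : PerfMatchingOn α => (M.crossing S).card = K)
      (q := fun M => M.crossing S = A) fun h => h ▸ hAK)]
    exact card_crossing_eq hAS hAK hs ht
  rw [Nat.card_eq_card_mul_of_fibers _ _ _ h_empty h_fiber, Nat.card_eq_fintype_card,
    Fintype.card_coe, card_powersetCard]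

end Crossing

end PerfMatchingOn

theorem prob_cut_edges_eq_general
    (ℓ : ℕ) (hev : Even ℓ) (s : ℕ) (S : Finset (Fin ℓ)) (hS : S.card = s)
    (K : ℕ) (hsev : Even (s - K)) (hlev : Even (ℓ - s - K)) :
    (({M : PerfMatching ℓ | (S.filter (fun a => M.1 a ∉ S)).card = K}).ncard : ℝ)
        / (Nat.card (PerfMatching ℓ))
      = (s.choose K * K.factorial * oddDoubleFact ((s - K) / 2)
          * (ℓ - s).choose K * oddDoubleFact ((ℓ - s - K) / 2) : ℝ)
        / (oddDoubleFact (ℓ / 2)) := by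
  subst hS
  have h_total : Nat.card (PerfMatching ℓ) = oddDoubleFact (ℓ / 2) :=
    PerfMatchingOn.card_eq_oddDoubleFact <| by
      rw [Nat.card_fin]; exact (Nat.two_mul_div_two_of_even hev).symm
  have h_cut : Nat.card {M : PerfMatching ℓ // (S.filter (fun a => M.1 a ∉ S)).card = K} =
      S.card.choose K * (oddDoubleFact ((S.card - K) / 2) *
        ((ℓ - S.card).descFactorial K * oddDoubleFact ((ℓ - S.card - K) / 2))) := by
    have h := PerfMatchingOn.card_crossing_card_eq S K hsev (by rwa [Fintype.card_fin])
    rw [Fintype.card_fin] at h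
    exact h
  rw [← Nat.card_coe_set_eq, Set.coe_ofPred, h_cut, h_total,
    Nat.descFactorial_eq_factorial_mul_choose]
  push_cast
  ring

theorem prob_cut_edges_eq
    (ℓ : ℕ) (hev : Even ℓ) (s : ℕ) (S : Finset (Fin ℓ)) (hS : S.card = s)
    (K : ℕ) (hKs : K ≤ s) (hsev : Even (s - K))
    (hKl : K ≤ ℓ - s) (hlev : Even (ℓ - s - K)) :
    (({M : PerfMatching ℓ | (S.filter (fun a => M.1 a ∉ S)).card = K}).ncard : ℝ)
        / (Nat.card (PerfMatching ℓ))
      = (s.choose K * K.factorial * oddDoubleFact ((s - K) / 2)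
          * (ℓ - s).choose K * oddDoubleFact ((ℓ - s - K) / 2) : ℝ)
        / (oddDoubleFact (ℓ / 2)) :=
  prob_cut_edges_eq_general ℓ hev s S hS K hsev hlev
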